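/- Let F_{3,2} : ℝ^5 → ℝ^5 be given by F_{3,2}(x,y,u1,u2,u3) = (x³+y²+u1·x+u2·y+u3·x², x·y, u1, u2, u3). Then for every point q = (x,y,u1,u2,u3) ∈ ℝ^5, the derivative of F_{3,2} at q applied to ξ_3(q) = (−(1/3)x²−(1/9)u3·x, (1/3)xy, x³+y²+u1·x+u2·y+u3·x²+(1/9)u1·u3, −(5/3)xy, −(2/3)u1+(2/9)u3²) equals η_3(F_{3,2}(q)), where η_3(X,Y,U1,U2,U3) = ((4/3)U2·Y, −(1/9)U3·Y, X+(1/9)U1·U3, −(5/3)Y, −(2/3)U1+(2/9)U3²). In particular η_3 is liftable over F_{3,2}. -/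

import Mathlib

/-- The stable map `F₃₂` of discrete algebra type `B_{3,2}`. -/
noncomputable def F32 : ℝ × ℝ × ℝ × ℝ × ℝ → ℝ × ℝ × ℝ × ℝ × ℝ :=
  fun (x, y, u1, u2, u3) =>
    (x^3 + y^2 + u1*x + u2*y + u3*x^2, x*y, u1, u2, u3)

/-- The vector field `η₃` on the target of `F₃₂`. -/
noncomputable def eta3 : ℝ × ℝ × ℝ × ℝ × ℝ → ℝ × ℝ × ℝ × ℝ × ℝ :=
  fun (X, Y, U1, U2, U3) =>
    ((4/3)*U2*Y, -(1/9)*U3*Y, X + (1/9)*U1*U3, -(5/3)*Y, -(2/3)*U1 + (2/9)*U3^2)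

/-- The lowerable vector field `ξ₃` on the source of `F₃₂`. -/
noncomputable def xi3 : ℝ × ℝ × ℝ × ℝ × ℝ → ℝ × ℝ × ℝ × ℝ × ℝ :=
  fun (x, y, u1, u2, u3) =>
    (-(1/3)*x^2 - (1/9)*u3*x, (1/3)*x*y,
     x^3 + y^2 + u1*x + u2*y + u3*x^2 + (1/9)*u1*u3,
     -(5/3)*x*y, -(2/3)*u1 + (2/9)*u3^2)

/-! `F₃₂` is polynomial, so its differential is its Jacobian matrix, and `d(F₃₂)(ξ₃) = η₃ ∘ F₃₂`
becomes a coordinatewise polynomial identity. The `U`-components hold because `F₃₂` is an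
unfolding (identity on the parameters); in the `Y`-component the `x²y` terms of `y ξ₃¹ + x ξ₃²`
cancel. -/

theorem fderiv_F32_apply (x y u1 u2 u3 a b c1 c2 c3 : ℝ) :
    fderiv ℝ F32 (x, y, u1, u2, u3) (a, b, c1, c2, c3) =
      ((3*x^2 + u1 + 2*u3*x)*a + (2*y + u2)*b + x*c1 + y*c2 + x^2*c3, y*a + x*b, c1, c2, c3) := by
  have hF : F32 = fun q => (q.1^3 + q.2.1^2 + q.2.2.1*q.1 + q.2.2.2.1*q.2.1 + q.2.2.2.2*q.1^2,
      q.1*q.2.1, q.2.2.1, q.2.2.2.1, q.2.2.2.2) := rfl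
  rw [hF]
  simp (disch := fun_prop) only [Prod.mk.eta, DifferentiableAt.fderiv_prodMk, fderiv_fun_add,
    fderiv_fun_pow, Nat.add_one_sub_one, nsmul_eq_mul, Nat.cast_ofNat, fderiv.fst, fderiv_fun_id,
    ContinuousLinearMap.comp_id, pow_one, fderiv.snd, fderiv_fun_mul, ContinuousLinearMap.prod_apply,
    add_apply, smul_apply, ContinuousLinearMap.coe_fst', smul_eq_mul, ContinuousLinearMap.comp_apply,
    ContinuousLinearMap.coe_snd', Prod.mk.injEq, and_true]
  constructor <;> ring

/-- `η₃` is liftable over `F₃₂` via `ξ₃`: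
for every `q`, `d(F₃₂)_q (ξ₃ q) = η₃ (F₃₂ q)`. -/
theorem eta3_liftable_over_F32 :
    ∀ q : ℝ × ℝ × ℝ × ℝ × ℝ, fderiv ℝ F32 q (xi3 q) = eta3 (F32 q) := by
  rintro ⟨x, y, u1, u2, u3⟩
  simp only [xi3, fderiv_F32_apply, F32, eta3, Prod.mk.injEq, and_true, true_and]
  exact ⟨by ring, by ring, by ring⟩
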